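/- Let d ≥ 2, β > 1, and r, s > 0. There exists C > 0 depending only on d and β such that for all x', y' ∈ ℝ^{d−1}, ∫_{ℝ^{d−1}} (r/(r + |x'−z'|))^{β + d − 1} (s/(s + |y'−z'|))^{β + d − 1} dz' ≤ C min(r,s)^{d−1} (max(r,s)/(max(r,s) + |x'−y'|))^{β+d−1}. -/
import Mathlib


open MeasureTheory

namespace Stmt15Aux

open Real

variable {n : ℕ}

lemma kernel_rw {α r : ℝ} (hr : 0 < r) (z : EuclideanSpace ℝ (Fin n)) :
    (r / (r + ‖z‖)) ^ α = (1 + ‖r⁻¹ • z‖) ^ (-α) := by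
  have hz : 0 ≤ ‖z‖ := norm_nonneg z
  rw [norm_smul, Real.norm_eq_abs, abs_of_pos (inv_pos.mpr hr),
    Real.rpow_neg (by positivity), ← Real.inv_rpow (by positivity)]
  congr 1
  field_simp

lemma integral_kernel {α : ℝ} {r : ℝ} (hr : 0 < r) :
    ∫ z : EuclideanSpace ℝ (Fin n), (r / (r + ‖z‖)) ^ α
      = r ^ n * ∫ w : EuclideanSpace ℝ (Fin n), (1 + ‖w‖) ^ (-α) := by
  simp_rw [kernel_rw hr]
  rw [Measure.integral_comp_inv_smul_of_nonneg volume
    (fun w : EuclideanSpace ℝ (Fin n) => (1 + ‖w‖) ^ (-α)) hr.le,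
    finrank_euclideanSpace_fin, smul_eq_mul]

lemma integral_kernel_shift {α : ℝ} {r : ℝ} (hr : 0 < r) (c : EuclideanSpace ℝ (Fin n)) :
    ∫ z : EuclideanSpace ℝ (Fin n), (r / (r + ‖c - z‖)) ^ α
      = r ^ n * ∫ w : EuclideanSpace ℝ (Fin n), (1 + ‖w‖) ^ (-α) := by
  rw [integral_sub_left_eq_self
    (fun z : EuclideanSpace ℝ (Fin n) => (r / (r + ‖z‖)) ^ α) volume c]
  exact integral_kernel hr

lemma integrable_kernel {α : ℝ} (hα : (n : ℝ) < α) {r : ℝ} (hr : 0 < r)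
    (c : EuclideanSpace ℝ (Fin n)) :
    Integrable (fun z : EuclideanSpace ℝ (Fin n) => (r / (r + ‖c - z‖)) ^ α) := by
  have h1 : Integrable (fun w : EuclideanSpace ℝ (Fin n) => (1 + ‖w‖) ^ (-α)) :=
    integrable_one_add_norm (by rwa [finrank_euclideanSpace_fin])
  have h2 : Integrable (fun z : EuclideanSpace ℝ (Fin n) => (r / (r + ‖z‖)) ^ α) := by
    have := h1.comp_smul (R := r⁻¹) (inv_ne_zero hr.ne')
    simpa only [← kernel_rw hr] using this
  exact h2.comp_sub_left c

set_option maxHeartbeats 2000000 in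
lemma key {α : ℝ} (hα : (n : ℝ) < α) (hα0 : 0 < α)
    {r s : ℝ} (hr : 0 < r) (hs : 0 < s) (hrs : r ≤ s)
    (x' y' : EuclideanSpace ℝ (Fin n)) :
    ∫ z : EuclideanSpace ℝ (Fin n),
        (r / (r + ‖x' - z‖)) ^ α * (s / (s + ‖y' - z‖)) ^ α ≤
      ((4 : ℝ) ^ α + 2 ^ α) * (∫ w : EuclideanSpace ℝ (Fin n), (1 + ‖w‖) ^ (-α)) *
        (r ^ n * (s / (s + ‖x' - y'‖)) ^ α) := by
  set Iα : ℝ := ∫ w : EuclideanSpace ℝ (Fin n), (1 + ‖w‖) ^ (-α) with hIα_def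
  have hIα : 0 ≤ Iα :=
    integral_nonneg fun w => Real.rpow_nonneg (by positivity) _
  set t : ℝ := ‖x' - y'‖ with ht_def
  have ht0 : 0 ≤ t := norm_nonneg _
  have hst0 : 0 < s + t := by positivity
  have hfrac_nonneg : 0 ≤ s / (s + t) := by positivity
  set K : ℝ := (s / (s + t)) ^ α with hK_def
  have hK0 : 0 ≤ K := Real.rpow_nonneg hfrac_nonneg α
  have hrn : (0:ℝ) ≤ r ^ n := by positivity
  have hK_nonneg : ∀ z : EuclideanSpace ℝ (Fin n),
      0 ≤ (r / (r + ‖x' - z‖)) ^ α * (s / (s + ‖y' - z‖)) ^ α := fun z => by positivity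
  have htri : ∀ z : EuclideanSpace ℝ (Fin n), t ≤ ‖x' - z‖ + ‖y' - z‖ := by
    intro z
    have h : x' - y' = (x' - z) - (y' - z) := by abel
    rw [ht_def, h]
    exact norm_sub_le _ _
  rcases le_or_gt t s with hts | hst
  · -- Case t ≤ s
    have hpw : ∀ z : EuclideanSpace ℝ (Fin n),
        (r / (r + ‖x' - z‖)) ^ α * (s / (s + ‖y' - z‖)) ^ α ≤
          2 ^ α * K * (r / (r + ‖x' - z‖)) ^ α := by
      intro z
      have hb0 : (0:ℝ) ≤ (r / (r + ‖x' - z‖)) ^ α := by positivity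
      have h1 : (s / (s + ‖y' - z‖)) ^ α ≤ 1 :=
        Real.rpow_le_one (by positivity)
          (div_le_one_of_le₀ (by simp [norm_nonneg]) (by positivity)) hα0.le
      have h2 : (1 : ℝ) ≤ 2 ^ α * K := by
        rw [hK_def, ← Real.mul_rpow (by norm_num) hfrac_nonneg]
        apply Real.one_le_rpow _ hα0.le
        rw [mul_div_assoc', le_div_iff₀ hst0]
        linarith
      calc (r / (r + ‖x' - z‖)) ^ α * (s / (s + ‖y' - z‖)) ^ α
          ≤ (r / (r + ‖x' - z‖)) ^ α * 1 :=
            mul_le_mul_of_nonneg_left h1 hb0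
        _ = 1 * (r / (r + ‖x' - z‖)) ^ α := by ring
        _ ≤ 2 ^ α * K * (r / (r + ‖x' - z‖)) ^ α :=
            mul_le_mul_of_nonneg_right h2 hb0
    calc ∫ z : EuclideanSpace ℝ (Fin n),
            (r / (r + ‖x' - z‖)) ^ α * (s / (s + ‖y' - z‖)) ^ α
        ≤ ∫ z : EuclideanSpace ℝ (Fin n),
            2 ^ α * K * (r / (r + ‖x' - z‖)) ^ α :=
          integral_mono_of_nonneg (Filter.Eventually.of_forall hK_nonneg)
            ((integrable_kernel hα hr x').const_mul _) (Filter.Eventually.of_forall hpw)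
      _ = 2 ^ α * K * (r ^ n * Iα) := by
          rw [integral_const_mul, integral_kernel_shift hr x']
      _ ≤ ((4 : ℝ) ^ α + 2 ^ α) * Iα * (r ^ n * K) := by
          have h4 : (0:ℝ) ≤ 4 ^ α * (Iα * (r ^ n * K)) :=
            mul_nonneg (Real.rpow_nonneg (by norm_num) _)
              (mul_nonneg hIα (mul_nonneg hrn hK0))
          have hring : ((4:ℝ) ^ α + 2 ^ α) * Iα * (r ^ n * K)
              = 4 ^ α * (Iα * (r ^ n * K)) + 2 ^ α * K * (r ^ n * Iα) := by ring
          linarith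
  · -- Case s < t
    have ht0' : 0 < t := lt_trans hs hst
    have hpw : ∀ z : EuclideanSpace ℝ (Fin n),
        (r / (r + ‖x' - z‖)) ^ α * (s / (s + ‖y' - z‖)) ^ α ≤
          (2 * r / t) ^ α * (s / (s + ‖y' - z‖)) ^ α
            + (2 * s / (s + t)) ^ α * (r / (r + ‖x' - z‖)) ^ α := by
      intro z
      set u : ℝ := ‖x' - z‖ with hu_def
      set v : ℝ := ‖y' - z‖ with hv_def
      have hu0 : 0 ≤ u := norm_nonneg _
      have hv0 : 0 ≤ v := norm_nonneg _
      have htuv : t ≤ u + v := htri z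
      rcases lt_or_ge v (t / 2) with hv | hv
      · have hu : t / 2 ≤ u := by linarith
        have hKr : (r / (r + u)) ^ α ≤ (2 * r / t) ^ α := by
          apply Real.rpow_le_rpow (by positivity) _ hα0.le
          rw [div_le_div_iff₀ (by positivity) ht0']
          nlinarith
        have h := mul_le_mul_of_nonneg_right hKr
          (Real.rpow_nonneg (show (0:ℝ) ≤ s / (s + v) by positivity) α)
        have hnn : (0:ℝ) ≤ (2 * s / (s + t)) ^ α * (r / (r + u)) ^ α := by positivity
        linarith
      · have hKs : (s / (s + v)) ^ α ≤ (2 * s / (s + t)) ^ α := by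
          apply Real.rpow_le_rpow (by positivity) _ hα0.le
          rw [div_le_div_iff₀ (by positivity) (by positivity)]
          nlinarith
        have h := mul_le_mul_of_nonneg_left hKs
          (Real.rpow_nonneg (show (0:ℝ) ≤ r / (r + u) by positivity) α)
        have hnn : (0:ℝ) ≤ (2 * r / t) ^ α * (s / (s + v)) ^ α := by positivity
        nlinarith
    have hint1 : Integrable (fun z : EuclideanSpace ℝ (Fin n) =>
        (2 * r / t) ^ α * (s / (s + ‖y' - z‖)) ^ α) :=
      (integrable_kernel hα hs y').const_mul _
    have hint2 : Integrable (fun z : EuclideanSpace ℝ (Fin n) =>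
        (2 * s / (s + t)) ^ α * (r / (r + ‖x' - z‖)) ^ α) :=
      (integrable_kernel hα hr x').const_mul _
    have hterm1 : (2 * r / t) ^ α * s ^ n ≤ 4 ^ α * (r ^ n * K) := by
      have hsplit : 2 * r / t = 2 * (r / s * (s / t)) := by field_simp
      have hbase : (2 * r / t) ^ α = 2 ^ α * ((r / s) ^ α * (s / t) ^ α) := by
        rw [hsplit, Real.mul_rpow (by norm_num) (by positivity),
          Real.mul_rpow (by positivity) (by positivity)]
      have h1 : (r / s) ^ α ≤ (r / s) ^ (n : ℝ) :=
        Real.rpow_le_rpow_of_exponent_ge (by positivity)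
          (div_le_one_of_le₀ hrs hs.le) hα.le
      have h2 : (s / t) ^ α ≤ 2 ^ α * K := by
        rw [hK_def, ← Real.mul_rpow (by norm_num) hfrac_nonneg]
        apply Real.rpow_le_rpow (by positivity) _ hα0.le
        rw [mul_div_assoc', div_le_div_iff₀ ht0' hst0]
        nlinarith
      have h3 : (r / s) ^ (n : ℝ) * s ^ n = r ^ n := by
        rw [Real.rpow_natCast, div_pow, div_mul_cancel₀]
        exact pow_ne_zero _ hs.ne'
      have hsn : (0:ℝ) ≤ s ^ n := by positivity
      have hprod : (r / s) ^ α * (s / t) ^ α ≤ (r / s) ^ (n:ℝ) * (2 ^ α * K) :=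
        mul_le_mul h1 h2 (by positivity) (by positivity)
      calc (2 * r / t) ^ α * s ^ n
          = 2 ^ α * ((r / s) ^ α * (s / t) ^ α) * s ^ n := by rw [hbase]
        _ ≤ 2 ^ α * ((r / s) ^ (n:ℝ) * (2 ^ α * K)) * s ^ n := by
            have h2pow : (0:ℝ) ≤ 2 ^ α := by positivity
            have := mul_le_mul_of_nonneg_left hprod h2pow
            exact mul_le_mul_of_nonneg_right this hsn
        _ = 4 ^ α * (((r / s) ^ (n:ℝ) * s ^ n) * K) := by
            rw [show (4:ℝ) = 2 * 2 by norm_num,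
              Real.mul_rpow (by norm_num) (by norm_num)]
            ring
        _ = 4 ^ α * (r ^ n * K) := by rw [h3]
    have hterm2 : (2 * s / (s + t)) ^ α = 2 ^ α * K := by
      rw [hK_def, mul_div_assoc, Real.mul_rpow (by norm_num) hfrac_nonneg]
    calc ∫ z : EuclideanSpace ℝ (Fin n),
            (r / (r + ‖x' - z‖)) ^ α * (s / (s + ‖y' - z‖)) ^ α
        ≤ ∫ z : EuclideanSpace ℝ (Fin n),
            ((2 * r / t) ^ α * (s / (s + ‖y' - z‖)) ^ α
              + (2 * s / (s + t)) ^ α * (r / (r + ‖x' - z‖)) ^ α) :=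
          integral_mono_of_nonneg (Filter.Eventually.of_forall hK_nonneg)
            (hint1.add hint2) (Filter.Eventually.of_forall hpw)
      _ = (2 * r / t) ^ α * (s ^ n * Iα) + (2 * s / (s + t)) ^ α * (r ^ n * Iα) := by
          rw [integral_add hint1 hint2, integral_const_mul, integral_const_mul,
            integral_kernel_shift hs y', integral_kernel_shift hr x']
      _ ≤ 4 ^ α * (r ^ n * K) * Iα + 2 ^ α * K * (r ^ n * Iα) := by
          have hA : (2 * r / t) ^ α * (s ^ n * Iα) ≤ 4 ^ α * (r ^ n * K) * Iα := by
            have := mul_le_mul_of_nonneg_right hterm1 hIα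
            calc (2 * r / t) ^ α * (s ^ n * Iα)
                = (2 * r / t) ^ α * s ^ n * Iα := by ring
              _ ≤ 4 ^ α * (r ^ n * K) * Iα := this
          have hB : (2 * s / (s + t)) ^ α * (r ^ n * Iα) = 2 ^ α * K * (r ^ n * Iα) := by
            rw [hterm2]
          linarith
      _ = ((4 : ℝ) ^ α + 2 ^ α) * Iα * (r ^ n * K) := by ring

end Stmt15Aux

open Stmt15Aux in
theorem stmt_15 (d : ℕ) (hd : 2 ≤ d) (β : ℝ) (hβ : 1 < β) :
    ∃ C > 0, ∀ r s : ℝ, 0 < r → 0 < s →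
      ∀ x' y' : EuclideanSpace ℝ (Fin (d - 1)),
        ∫ z' : EuclideanSpace ℝ (Fin (d - 1)),
            (r / (r + ‖x' - z'‖)) ^ (β + (d : ℝ) - 1) *
              (s / (s + ‖y' - z'‖)) ^ (β + (d : ℝ) - 1) ≤
          C * min r s ^ ((d : ℝ) - 1) *
            (max r s / (max r s + ‖x' - y'‖)) ^ (β + (d : ℝ) - 1) := by
  have hd1' : (1:ℕ) ≤ d := by omega
  have hd1 : ((d - 1 : ℕ) : ℝ) = (d : ℝ) - 1 := by
    rw [Nat.cast_sub hd1', Nat.cast_one]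
  set n : ℕ := d - 1 with hn_def
  set α : ℝ := β + (d : ℝ) - 1 with hα_def
  have hdR : (2:ℝ) ≤ (d:ℝ) := by exact_mod_cast hd
  have hα : (n : ℝ) < α := by rw [hd1, hα_def]; linarith
  have hα0 : 0 < α := by rw [hα_def]; linarith
  set Iα : ℝ := ∫ w : EuclideanSpace ℝ (Fin n), (1 + ‖w‖) ^ (-α) with hIα_def
  have hIα : 0 ≤ Iα :=
    integral_nonneg fun w => Real.rpow_nonneg (by positivity) _
  have hC0 : 0 ≤ ((4:ℝ) ^ α + 2 ^ α) * Iα :=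
    mul_nonneg (by positivity) hIα
  refine ⟨((4:ℝ) ^ α + 2 ^ α) * Iα + 1, by linarith, ?_⟩
  intro r s hr hs x' y'
  rw [← hd1, Real.rpow_natCast]
  rcases le_total r s with hrs | hsr
  · rw [min_eq_left hrs, max_eq_right hrs]
    have h := key hα hα0 hr hs hrs x' y'
    have h1 : 0 ≤ r ^ n * (s / (s + ‖x' - y'‖)) ^ α :=
      mul_nonneg (by positivity) (Real.rpow_nonneg (by positivity) _)
    have hring : (((4:ℝ) ^ α + 2 ^ α) * Iα + 1) * r ^ n * (s / (s + ‖x' - y'‖)) ^ α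
        = ((4:ℝ) ^ α + 2 ^ α) * Iα * (r ^ n * (s / (s + ‖x' - y'‖)) ^ α)
          + r ^ n * (s / (s + ‖x' - y'‖)) ^ α := by ring
    rw [hring]
    linarith
  · rw [min_eq_right hsr, max_eq_left hsr]
    have h := key hα hα0 hs hr hsr y' x'
    rw [norm_sub_rev y' x'] at h
    have hswap : (fun z : EuclideanSpace ℝ (Fin n) =>
        (r / (r + ‖x' - z‖)) ^ α * (s / (s + ‖y' - z‖)) ^ α)
        = fun z => (s / (s + ‖y' - z‖)) ^ α * (r / (r + ‖x' - z‖)) ^ α := by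
      funext z; ring
    rw [hswap]
    have h1 : 0 ≤ s ^ n * (r / (r + ‖x' - y'‖)) ^ α :=
      mul_nonneg (by positivity) (Real.rpow_nonneg (by positivity) _)
    have hring : (((4:ℝ) ^ α + 2 ^ α) * Iα + 1) * s ^ n * (r / (r + ‖x' - y'‖)) ^ α
        = ((4:ℝ) ^ α + 2 ^ α) * Iα * (s ^ n * (r / (r + ‖x' - y'‖)) ^ α)
          + s ^ n * (r / (r + ‖x' - y'‖)) ^ α := by ring
    rw [hring]
    linarith
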